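/- Let N ≥ 3 and let ξ be a nonzero vector in ℝ^N. Then for every ε > 0 and every c ∈ [0, 1], there exist nonzero vectors δ₁, δ₂ in ℝ^N orthogonal to ξ with ‖δ₁‖ < ε and ‖δ₂‖ < ε such that d(span(ξ+δ₁, ξ), span(ξ+δ₂, ξ)) = c. In other words, arbitrarily small perturbations of a set of collinear vectors can make the gap between the spanned subspaces take any value in [0, 1]. -/

import Mathlib

open scoped RealInnerProductSpace

/-- The orthogonal projection onto a subspace, as a continuous linear map on the
ambient space. -/
noncomputable def orthProjCLM {E : Type*} [NormedAddCommGroup E] [InnerProductSpace ℝ E]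
    [FiniteDimensional ℝ E] (U : Submodule ℝ E) : E →L[ℝ] E :=
  U.subtypeL.comp (Submodule.orthogonalProjection U)

/-- The gap metric between subspaces: the operator norm of the difference of the
orthogonal projections. -/
noncomputable def gap {E : Type*} [NormedAddCommGroup E] [InnerProductSpace ℝ E]
    [FiniteDimensional ℝ E] (U V : Submodule ℝ E) : ℝ :=
  ‖orthProjCLM U - orthProjCLM V‖

lemma orthProjCLM_apply {E : Type*} [NormedAddCommGroup E] [InnerProductSpace ℝ E]
    [FiniteDimensional ℝ E] (U : Submodule ℝ E) (x : E) :
    orthProjCLM U x = (Submodule.orthogonalProjection U x : E) := rfl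

lemma orthProjCLM_sup {E : Type*} [NormedAddCommGroup E] [InnerProductSpace ℝ E]
    [FiniteDimensional ℝ E] (U V : Submodule ℝ E)
    (h : ∀ u ∈ U, ∀ v ∈ V, ⟪u, v⟫ = 0) :
    orthProjCLM (U ⊔ V) = orthProjCLM U + orthProjCLM V := by
  ext x
  simp only [ContinuousLinearMap.add_apply, orthProjCLM_apply]
  apply Submodule.eq_starProjection_of_mem_of_inner_eq_zero
  · exact Submodule.add_mem_sup (Submodule.orthogonalProjection U x).2 (Submodule.orthogonalProjection V x).2
  · intro w hw
    rcases Submodule.mem_sup.1 hw with ⟨u, hu, v, hv, rfl⟩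
    have h1 : ⟪x - Submodule.orthogonalProjection U x, u⟫ = 0 :=
      Submodule.starProjection_inner_eq_zero x u hu
    have h2 : ⟪x - Submodule.orthogonalProjection V x, v⟫ = 0 :=
      Submodule.starProjection_inner_eq_zero x v hv
    have h3 : ⟪(Submodule.orthogonalProjection V x : E), u⟫ = 0 := by
      rw [real_inner_comm]; exact h u hu _ (Submodule.orthogonalProjection V x).2
    have h4 : ⟪(Submodule.orthogonalProjection U x : E), v⟫ = 0 :=
      h _ (Submodule.orthogonalProjection U x).2 v hv
    have heq : x - ((Submodule.orthogonalProjection U x : E) + (Submodule.orthogonalProjection V x : E))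
        = (x - Submodule.orthogonalProjection U x) - Submodule.orthogonalProjection V x := by abel
    rw [heq]
    simp only [inner_add_right, inner_sub_left] at *
    linarith

lemma orthProjCLM_unit_apply {E : Type*} [NormedAddCommGroup E] [InnerProductSpace ℝ E]
    [FiniteDimensional ℝ E] {v : E} (hv : ‖v‖ = 1) (x : E) :
    orthProjCLM (Submodule.span ℝ {v}) x = ⟪v, x⟫ • v := by
  rw [show orthProjCLM (Submodule.span ℝ {v}) x = (Submodule.span ℝ {v}).starProjection x from rfl,
    Submodule.starProjection_singleton, hv]
  norm_num

lemma bessel_two {E : Type*} [NormedAddCommGroup E] [InnerProductSpace ℝ E]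
    {e f : E} (he : ‖e‖ = 1) (hf : ‖f‖ = 1) (hef : ⟪e, f⟫ = 0) (x : E) :
    ⟪e, x⟫ ^ 2 + ⟪f, x⟫ ^ 2 ≤ ‖x‖ ^ 2 := by
  have hee : ⟪e, e⟫ = 1 := by rw [real_inner_self_eq_norm_sq, he]; norm_num
  have hff : ⟪f, f⟫ = 1 := by rw [real_inner_self_eq_norm_sq, hf]; norm_num
  have hfe : ⟪f, e⟫ = 0 := by rw [real_inner_comm]; exact hef
  have hxe : ⟪x, e⟫ = ⟪e, x⟫ := real_inner_comm e x
  have hxf : ⟪x, f⟫ = ⟪f, x⟫ := real_inner_comm f x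
  have key : ‖x - (⟪e, x⟫ • e + ⟪f, x⟫ • f)‖ ^ 2 = ‖x‖ ^ 2 - (⟪e, x⟫ ^ 2 + ⟪f, x⟫ ^ 2) := by
    rw [← real_inner_self_eq_norm_sq, ← real_inner_self_eq_norm_sq]
    simp only [inner_sub_left, inner_sub_right, inner_add_left, inner_add_right,
      real_inner_smul_left, real_inner_smul_right, hee, hff, hef, hfe, hxe, hxf]
    ring
  nlinarith [sq_nonneg ‖x - (⟪e, x⟫ • e + ⟪f, x⟫ • f)‖]

lemma norm_projLine_sub {E : Type*} [NormedAddCommGroup E] [InnerProductSpace ℝ E]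
    [FiniteDimensional ℝ E] {e f : E} (he : ‖e‖ = 1) (hf : ‖f‖ = 1) (hef : ⟪e, f⟫ = 0)
    {a c : ℝ} (hc : 0 ≤ c) (hac : a ^ 2 + c ^ 2 = 1) :
    ‖orthProjCLM (Submodule.span ℝ {e}) -
      orthProjCLM (Submodule.span ℝ {a • e + c • f})‖ = c := by
  set v : E := a • e + c • f with hv
  have hee : ⟪e, e⟫ = 1 := by rw [real_inner_self_eq_norm_sq, he]; norm_num
  have hff : ⟪f, f⟫ = 1 := by rw [real_inner_self_eq_norm_sq, hf]; norm_num
  have hfe : ⟪f, e⟫ = 0 := by rw [real_inner_comm]; exact hef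
  have hvnorm : ‖v‖ = 1 := by
    have hsq : ‖v‖ ^ 2 = 1 := by
      rw [← real_inner_self_eq_norm_sq, hv]
      simp only [inner_add_left, inner_add_right, real_inner_smul_left, real_inner_smul_right,
        hee, hff, hef, hfe]
      linarith [hac]
    rw [← Real.sqrt_sq (norm_nonneg v), hsq, Real.sqrt_one]
  set T := orthProjCLM (Submodule.span ℝ {e}) - orthProjCLM (Submodule.span ℝ {v}) with hT
  have hTx : ∀ x : E, T x = (c * (c * ⟪e, x⟫ - a * ⟪f, x⟫)) • e
      - (c * (a * ⟪e, x⟫ + c * ⟪f, x⟫)) • f := by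
    intro x
    rw [hT, ContinuousLinearMap.sub_apply, orthProjCLM_unit_apply he,
      orthProjCLM_unit_apply hvnorm, hv]
    simp only [inner_add_left, real_inner_smul_left]
    rw [smul_add, smul_smul, smul_smul]
    have h1 : ⟪e, x⟫ - (a * ⟪e, x⟫ + c * ⟪f, x⟫) * a = c * (c * ⟪e, x⟫ - a * ⟪f, x⟫) := by
      linear_combination -⟪e, x⟫ * hac
    have h2 : (a * ⟪e, x⟫ + c * ⟪f, x⟫) * c = c * (a * ⟪e, x⟫ + c * ⟪f, x⟫) := by ring
    rw [← h1, ← h2]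
    module
  have hnsq : ∀ x : E, ‖T x‖ ^ 2 = c ^ 2 * ((c * ⟪e, x⟫ - a * ⟪f, x⟫) ^ 2
      + (a * ⟪e, x⟫ + c * ⟪f, x⟫) ^ 2) := by
    intro x
    rw [hTx x, ← real_inner_self_eq_norm_sq]
    simp only [inner_sub_left, inner_sub_right, real_inner_smul_left, real_inner_smul_right,
      hee, hff, hef, hfe]
    ring
  apply le_antisymm
  · apply ContinuousLinearMap.opNorm_le_bound _ hc
    intro x
    have hexp : (c * ⟪e, x⟫ - a * ⟪f, x⟫) ^ 2 + (a * ⟪e, x⟫ + c * ⟪f, x⟫) ^ 2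
        = ⟪e, x⟫ ^ 2 + ⟪f, x⟫ ^ 2 := by
      linear_combination (⟪e, x⟫ ^ 2 + ⟪f, x⟫ ^ 2) * hac
    have h1 : ‖T x‖ ^ 2 ≤ (c * ‖x‖) ^ 2 := by
      rw [hnsq x, hexp]
      have hb := bessel_two he hf hef x
      nlinarith [sq_nonneg c]
    have h2 : (0:ℝ) ≤ c * ‖x‖ := mul_nonneg hc (norm_nonneg x)
    calc ‖T x‖ = Real.sqrt (‖T x‖ ^ 2) := (Real.sqrt_sq (norm_nonneg _)).symm
      _ ≤ Real.sqrt ((c * ‖x‖) ^ 2) := Real.sqrt_le_sqrt h1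
      _ = c * ‖x‖ := Real.sqrt_sq h2
  · have hTfsq : ‖T f‖ ^ 2 = c ^ 2 := by
      rw [hnsq f, hef, hff]
      linear_combination c ^ 2 * hac
    have hTf : ‖T f‖ = c := by
      rw [← Real.sqrt_sq (norm_nonneg (T f)), hTfsq, Real.sqrt_sq hc]
    calc c = ‖T f‖ := hTf.symm
      _ ≤ ‖T‖ * ‖f‖ := T.le_opNorm f
      _ = ‖T‖ := by rw [hf, mul_one]

lemma span_pair_perturb {E : Type*} [AddCommGroup E] [Module ℝ E] (ξ δ : E) :
    Submodule.span ℝ {ξ + δ, ξ} = Submodule.span ℝ {δ} ⊔ Submodule.span ℝ {ξ} := by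
  rw [show ({ξ + δ, ξ} : Set E) = insert (ξ + δ) {ξ} from rfl, Submodule.span_insert]
  apply le_antisymm
  · apply sup_le
    · rw [Submodule.span_singleton_le_iff_mem]
      exact Submodule.add_mem _
        (Submodule.mem_sup_right (Submodule.mem_span_singleton_self ξ))
        (Submodule.mem_sup_left (Submodule.mem_span_singleton_self δ))
    · exact le_sup_right
  · apply sup_le
    · rw [Submodule.span_singleton_le_iff_mem]
      have hmem := Submodule.sub_mem _
        (Submodule.mem_sup_left (Submodule.mem_span_singleton_self (ξ + δ))
          (T := Submodule.span ℝ {ξ}))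
        (Submodule.mem_sup_right (Submodule.mem_span_singleton_self ξ)
          (S := Submodule.span ℝ {ξ + δ}))
      simpa using hmem
    · exact le_sup_right

lemma inner_span_singleton_zero {E : Type*} [NormedAddCommGroup E] [InnerProductSpace ℝ E]
    {u v : E} (h : ⟪u, v⟫ = 0) :
    ∀ x ∈ Submodule.span ℝ {u}, ∀ y ∈ Submodule.span ℝ {v}, ⟪x, y⟫ = 0 := by
  intro x hx y hy
  rcases Submodule.mem_span_singleton.1 hx with ⟨s, rfl⟩
  rcases Submodule.mem_span_singleton.1 hy with ⟨r, rfl⟩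
  rw [real_inner_smul_left, real_inner_smul_right, h]; ring

theorem gap_sensitivity {N : ℕ} (hN : 3 ≤ N) (ξ : EuclideanSpace ℝ (Fin N)) (hξ : ξ ≠ 0) :
    ∀ ε > (0 : ℝ), ∀ c ∈ Set.Icc (0 : ℝ) 1,
      ∃ δ₁ δ₂ : EuclideanSpace ℝ (Fin N),
        δ₁ ≠ 0 ∧ δ₂ ≠ 0 ∧ ⟪δ₁, ξ⟫ = 0 ∧ ⟪δ₂, ξ⟫ = 0 ∧ ‖δ₁‖ < ε ∧ ‖δ₂‖ < ε ∧
          gap (Submodule.span ℝ {ξ + δ₁, ξ}) (Submodule.span ℝ {ξ + δ₂, ξ}) = c := by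
  intro ε hε c hc
  set L : Submodule ℝ (EuclideanSpace ℝ (Fin N)) := Submodule.span ℝ {ξ} with hL
  have hfrL : Module.finrank ℝ L = 1 := finrank_span_singleton hξ
  have hfrE : Module.finrank ℝ (EuclideanSpace ℝ (Fin N)) = N := finrank_euclideanSpace_fin
  have hsum := Submodule.finrank_add_finrank_orthogonal L
  have hn : 2 ≤ Module.finrank ℝ ↥Lᗮ := by omega
  set B := stdOrthonormalBasis ℝ ↥Lᗮ with hB
  set e : EuclideanSpace ℝ (Fin N) := ((B ⟨0, by omega⟩ : ↥Lᗮ) : EuclideanSpace ℝ (Fin N)) with he'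
  set f : EuclideanSpace ℝ (Fin N) := ((B ⟨1, by omega⟩ : ↥Lᗮ) : EuclideanSpace ℝ (Fin N)) with hf'
  have he : ‖e‖ = 1 := by
    rw [he', ← Submodule.coe_norm]
    exact B.orthonormal.1 _
  have hf : ‖f‖ = 1 := by
    rw [hf', ← Submodule.coe_norm]
    exact B.orthonormal.1 _
  have hef : ⟪e, f⟫ = 0 := by
    rw [he', hf', ← Submodule.coe_inner]
    exact B.orthonormal.2 (by simp)
  have heξ : ⟪e, ξ⟫ = 0 := by
    have := (Submodule.mem_orthogonal_singleton_iff_inner_left (𝕜 := ℝ)).1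
      (SetLike.coe_mem (B ⟨0, by omega⟩))
    exact this
  have hfξ : ⟪f, ξ⟫ = 0 := by
    have := (Submodule.mem_orthogonal_singleton_iff_inner_left (𝕜 := ℝ)).1
      (SetLike.coe_mem (B ⟨1, by omega⟩))
    exact this
  obtain ⟨hc0, hc1⟩ := hc
  set a : ℝ := Real.sqrt (1 - c ^ 2) with ha'
  have ha2 : a ^ 2 = 1 - c ^ 2 := Real.sq_sqrt (by nlinarith)
  have hac : a ^ 2 + c ^ 2 = 1 := by linarith
  set w : EuclideanSpace ℝ (Fin N) := a • e + c • f with hw'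
  have hee : ⟪e, e⟫ = 1 := by rw [real_inner_self_eq_norm_sq, he]; norm_num
  have hff : ⟪f, f⟫ = 1 := by rw [real_inner_self_eq_norm_sq, hf]; norm_num
  have hfe : ⟪f, e⟫ = 0 := by rw [real_inner_comm]; exact hef
  have hwnorm : ‖w‖ = 1 := by
    have hsq : ‖w‖ ^ 2 = 1 := by
      rw [← real_inner_self_eq_norm_sq, hw']
      simp only [inner_add_left, inner_add_right, real_inner_smul_left, real_inner_smul_right,
        hee, hff, hef, hfe]
      linarith
    rw [← Real.sqrt_sq (norm_nonneg w), hsq, Real.sqrt_one]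
  set t : ℝ := ε / 2 with ht'
  have ht : 0 < t := by positivity
  have hte : t < ε := by rw [ht']; linarith
  have hene : e ≠ 0 := by intro h; rw [h, norm_zero] at he; norm_num at he
  have hwne : w ≠ 0 := by intro h; rw [h, norm_zero] at hwnorm; norm_num at hwnorm
  refine ⟨t • e, t • w, smul_ne_zero ht.ne' hene, smul_ne_zero ht.ne' hwne, ?_, ?_, ?_, ?_, ?_⟩
  · rw [real_inner_smul_left, heξ]; ring
  · rw [hw', real_inner_smul_left, inner_add_left, real_inner_smul_left,
      real_inner_smul_left, heξ, hfξ]; ring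
  · rw [norm_smul, he, Real.norm_eq_abs, abs_of_pos ht]; simpa using hte
  · rw [norm_smul, hwnorm, Real.norm_eq_abs, abs_of_pos ht]; simpa using hte
  · have hspan1 : Submodule.span ℝ {ξ + t • e, ξ}
        = Submodule.span ℝ {e} ⊔ Submodule.span ℝ {ξ} := by
      rw [span_pair_perturb, Submodule.span_singleton_smul_eq
        (isUnit_iff_ne_zero.2 ht.ne') e]
    have hspan2 : Submodule.span ℝ {ξ + t • w, ξ}
        = Submodule.span ℝ {w} ⊔ Submodule.span ℝ {ξ} := by
      rw [span_pair_perturb, Submodule.span_singleton_smul_eq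
        (isUnit_iff_ne_zero.2 ht.ne') w]
    have hwξ : ⟪w, ξ⟫ = 0 := by
      rw [hw', inner_add_left, real_inner_smul_left, real_inner_smul_left, heξ, hfξ]; ring
    rw [gap, hspan1, hspan2,
      orthProjCLM_sup _ _ (inner_span_singleton_zero heξ),
      orthProjCLM_sup _ _ (inner_span_singleton_zero hwξ)]
    have : orthProjCLM (Submodule.span ℝ {e}) + orthProjCLM (Submodule.span ℝ {ξ})
        - (orthProjCLM (Submodule.span ℝ {w}) + orthProjCLM (Submodule.span ℝ {ξ}))
        = orthProjCLM (Submodule.span ℝ {e}) - orthProjCLM (Submodule.span ℝ {w}) := by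
      abel
    rw [this, hw']
    exact norm_projLine_sub he hf hef hc0 hac
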